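/- In the case |J ∩ K| = p-3, writing J' = J \ K = {j'}, K' = K \ J = {k'_1 < ... < k'_5}, Q = J ∩ K, the Plücker-like expression P₂(J,K) equals Σ_{1 ≤ a < b ≤ 5} (-1)^(ε(a,b) + a + b) λ_{Q ∪ {j', k'_a, k'_b}} λ_{Q ∪ K' \ {k'_a, k'_b}}, where ε(a,b) = 1 if k'_a < j' < k'_b and 0 otherwise, and this expression has 10 distinct nonzero quadratic monomials (assuming the λ's are independent indeterminates). -/
import Mathlib


open Finset MvPolynomial

/-- `pairsCount A B` is the number of pairs `(a, b)` with `a ∈ A`, `b ∈ B` and `a > b`. -/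
def pairsCount (A B : Finset ℕ) : ℕ := ((A ×ˢ B).filter fun x => x.2 < x.1).card

/-- The Plücker-like expression `P₂(J,K)`. -/
def P2 {R : Type*} [CommRing R] (lam : Finset ℕ → R) (J K : Finset ℕ) : R :=
  ∑ I ∈ (K \ J).powersetCard 2,
    (-1 : R) ^ pairsCount (symmDiff J K) I * lam (J ∪ I) * lam (K \ I)

lemma pairsCount_union_left {A B C : Finset ℕ} (h : Disjoint A B) :
    pairsCount (A ∪ B) C = pairsCount A C + pairsCount B C := by
  unfold pairsCount
  rw [Finset.union_product, Finset.filter_union, Finset.card_union_of_disjoint]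
  exact Finset.disjoint_filter_filter (Finset.disjoint_product.mpr (Or.inl h))

lemma pairsCount_singleton_left (x : ℕ) (C : Finset ℕ) :
    pairsCount {x} C = (C.filter (· < x)).card := by
  unfold pairsCount
  rw [Finset.singleton_product, Finset.filter_map, Finset.card_map]
  rfl

lemma pairsCount_eq_sum (A C : Finset ℕ) :
    pairsCount A C = ∑ x ∈ A, (C.filter (· < x)).card := by
  unfold pairsCount
  rw [Finset.card_filter, Finset.sum_product]
  exact Finset.sum_congr rfl fun x _ => (Finset.card_filter _ _).symm

lemma filter_pair_card {x y : ℕ} (p : ℕ → Prop) [DecidablePred p] (h : x ≠ y) :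
    (({x, y} : Finset ℕ).filter p).card = (if p x then 1 else 0) + (if p y then 1 else 0) := by
  rw [Finset.filter_insert, Finset.filter_singleton]
  split_ifs <;> simp_all

lemma pair_eq_pair_inj {k : Fin 5 → ℕ} (hmono : StrictMono k) {a b c d : Fin 5}
    (hab : a < b) (hcd : c < d) (h : ({k a, k b} : Finset ℕ) = {k c, k d}) :
    a = c ∧ b = d := by
  have h1 : k a = k c ∨ k a = k d := by
    have : k a ∈ ({k c, k d} : Finset ℕ) := h ▸ by simp
    simpa using this
  have h2 : k b = k c ∨ k b = k d := by
    have : k b ∈ ({k c, k d} : Finset ℕ) := h ▸ by simp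
    simpa using this
  have hinj := hmono.injective
  rcases h1 with h1 | h1 <;> rcases h2 with h2 | h2
  · exact absurd (hinj (h1 ▸ h2)) (by intro e; exact absurd (e ▸ hab) (lt_irrefl _))
  · exact ⟨hinj h1, hinj h2⟩
  · have e1 := hinj h1; have e2 := hinj h2
    subst e1; subst e2
    exact absurd (hab.trans hcd) (lt_irrefl _)
  · exact absurd (hinj (h1 ▸ h2)) (by intro e; exact absurd (e ▸ hab) (lt_irrefl _))

lemma fin5_count (a : Fin 5) : ∑ i : Fin 5, (if a < i then (1:ℕ) else 0) = 4 - (a : ℕ) := by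
  fin_cases a <;> decide

lemma mono_term {S T : Finset ℕ} (e : ℕ) :
    (-1 : MvPolynomial (Finset ℕ) ℤ) ^ e * X S * X T =
      monomial (Finsupp.single S 1 + Finsupp.single T 1) ((-1 : ℤ) ^ e) := by
  have h1 : (-1 : MvPolynomial (Finset ℕ) ℤ) ^ e = C ((-1 : ℤ) ^ e) := by
    rw [map_pow, map_neg, map_one]
  rw [h1, X, X, mul_assoc, monomial_mul, C_mul_monomial, mul_one, mul_one]

/-- In the case `|J ∩ K| = p - 3`, with `J \ K = {j'}` and `K \ J = {k'_1 < ... < k'_5}`,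
the Plücker-like expression (with indeterminate coefficients `λ_S`) equals the stated
10-term expression, and it has exactly 10 distinct nonzero quadratic monomials. -/
theorem pluckerLike_case_q_eq_p_sub_three (n p : ℕ) (hp : 3 ≤ p) (hpn : p ≤ n - 3)
    (J K : Finset ℕ) (hJn : J ⊆ Finset.Icc 1 n) (hKn : K ⊆ Finset.Icc 1 n)
    (hJ : J.card = p - 2) (hK : K.card = p + 2) (hq : (J ∩ K).card = p - 3)
    (j' : ℕ) (hj' : J \ K = {j'})
    (k : Fin 5 → ℕ) (hmono : StrictMono k)
    (hkK : K \ J = {k 0, k 1, k 2, k 3, k 4}) :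
    P2 (fun S => (X S : MvPolynomial (Finset ℕ) ℤ)) J K =
      (∑ a : Fin 5, ∑ b : Fin 5,
        if a < b then
          (-1 : MvPolynomial (Finset ℕ) ℤ) ^
              ((if k a < j' ∧ j' < k b then 1 else 0) + (a : ℕ) + (b : ℕ)) *
            X ((J ∩ K) ∪ {j', k a, k b}) * X ((J ∩ K) ∪ ((K \ J) \ {k a, k b}))
        else 0) ∧
    (P2 (fun S => (X S : MvPolynomial (Finset ℕ) ℤ)) J K).support.card = 10 := by
  classical
  have hinj := hmono.injective
  have hne' : ∀ {a b : Fin 5}, a ≠ b → k a ≠ k b := fun h e => h (hinj e)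
  have hj'J : j' ∈ J := (Finset.mem_sdiff.mp (hj' ▸ Finset.mem_singleton_self j')).1
  have hj'K : j' ∉ K := (Finset.mem_sdiff.mp (hj' ▸ Finset.mem_singleton_self j')).2
  have hkmem : ∀ i : Fin 5, k i ∈ K \ J := by
    intro i; rw [hkK]; fin_cases i <;> simp
  have hkKm : ∀ i, k i ∈ K := fun i => (Finset.mem_sdiff.mp (hkmem i)).1
  have hkJ : ∀ i, k i ∉ J := fun i => (Finset.mem_sdiff.mp (hkmem i)).2
  have hJdec : J = (J ∩ K) ∪ {j'} := by
    rw [← hj', Finset.union_comm]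
    exact (Finset.sdiff_union_inter J K).symm
  have hKdec : K = (J ∩ K) ∪ (K \ J) := by
    rw [Finset.inter_comm, Finset.union_comm]
    exact (Finset.sdiff_union_inter K J).symm
  have hsymm : symmDiff J K = {j'} ∪ (K \ J) := by
    rw [symmDiff_def, Finset.sup_eq_union, hj']
  have himage : ({k 0, k 1, k 2, k 3, k 4} : Finset ℕ) = Finset.image k Finset.univ := by
    ext x
    simp only [Finset.mem_insert, Finset.mem_singleton, Finset.mem_image, Finset.mem_univ,
      true_and]
    constructor
    · rintro (rfl | rfl | rfl | rfl | rfl)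
      exacts [⟨0, rfl⟩, ⟨1, rfl⟩, ⟨2, rfl⟩, ⟨3, rfl⟩, ⟨4, rfl⟩]
    · rintro ⟨i, rfl⟩
      fin_cases i <;> simp
  -- parity lemma
  have hpc : ∀ a b : Fin 5, a < b →
      pairsCount (symmDiff J K) {k a, k b} % 2 =
        ((if k a < j' ∧ j' < k b then 1 else 0) + (a : ℕ) + (b : ℕ)) % 2 := by
    intro a b hab
    have hne : k a ≠ k b := hne' (ne_of_lt hab)
    have hkab : k a < k b := hmono hab
    have hdisj1 : Disjoint ({j'} : Finset ℕ) (K \ J) := by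
      simp [Finset.disjoint_singleton_left, hj'K]
    have e2 : pairsCount (K \ J) {k a, k b} = (4 - (a : ℕ)) + (4 - (b : ℕ)) := by
      rw [hkK, himage, pairsCount_eq_sum,
        Finset.sum_image (fun x _ y _ h => hinj h)]
      have hterm : ∀ i : Fin 5, (({k a, k b} : Finset ℕ).filter (· < k i)).card
          = (if a < i then 1 else 0) + (if b < i then 1 else 0) := by
        intro i
        rw [filter_pair_card _ hne]
        simp only [hmono.lt_iff_lt]
      simp_rw [hterm]
      rw [Finset.sum_add_distrib, fin5_count, fin5_count]
    have e1 : pairsCount (symmDiff J K) {k a, k b}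
        = ((if k a < j' then 1 else 0) + (if k b < j' then 1 else 0))
          + ((4 - (a : ℕ)) + (4 - (b : ℕ))) := by
      rw [hsymm, pairsCount_union_left hdisj1, pairsCount_singleton_left,
        filter_pair_card _ hne, e2]
    rw [e1]
    have hja : j' ≠ k a := fun h => hj'K (h ▸ hkKm a)
    have hjb : j' ≠ k b := fun h => hj'K (h ▸ hkKm b)
    have ha5 : (a : ℕ) < 5 := a.isLt
    have hb5 : (b : ℕ) < 5 := b.isLt
    have habn : (a : ℕ) < (b : ℕ) := hab
    split_ifs <;> omega
  -- set-theoretic identities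
  have hdQ : ∀ a b : Fin 5, Disjoint (J ∩ K) ({k a, k b} : Finset ℕ) := by
    intro a b
    refine Finset.disjoint_right.mpr ?_
    intro x hx
    simp only [Finset.mem_insert, Finset.mem_singleton] at hx
    rcases hx with rfl | rfl <;> simp [hkJ a, hkJ b]
  have hS : ∀ a b : Fin 5, J ∪ {k a, k b} = (J ∩ K) ∪ {j', k a, k b} := by
    intro a b
    conv_lhs => rw [hJdec]
    rw [Finset.union_assoc]
    congr 1
  have hT : ∀ a b : Fin 5, K \ {k a, k b} = (J ∩ K) ∪ ((K \ J) \ {k a, k b}) := by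
    intro a b
    conv_lhs => rw [hKdec]
    rw [Finset.union_sdiff_distrib, Finset.sdiff_eq_self_of_disjoint (hdQ a b)]
  -- reindexing
  set Pset : Finset (Fin 5 × Fin 5) := Finset.univ.filter (fun x => x.1 < x.2) with hPset
  have hpows : (K \ J).powersetCard 2 = Pset.image (fun x => ({k x.1, k x.2} : Finset ℕ)) := by
    ext I
    simp only [Finset.mem_powersetCard, Finset.mem_image, hPset, Finset.mem_filter,
      Finset.mem_univ, true_and]
    constructor
    · rintro ⟨hsub, hcard⟩
      obtain ⟨x, y, hxy, rfl⟩ := Finset.card_eq_two.mp hcard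
      have hx : x ∈ K \ J := hsub (by simp)
      have hy : y ∈ K \ J := hsub (by simp)
      rw [hkK] at hx hy
      simp only [Finset.mem_insert, Finset.mem_singleton] at hx hy
      obtain ⟨a, rfl⟩ : ∃ i : Fin 5, k i = x := by
        rcases hx with rfl | rfl | rfl | rfl | rfl
        exacts [⟨0, rfl⟩, ⟨1, rfl⟩, ⟨2, rfl⟩, ⟨3, rfl⟩, ⟨4, rfl⟩]
      obtain ⟨b, rfl⟩ : ∃ i : Fin 5, k i = y := by
        rcases hy with rfl | rfl | rfl | rfl | rfl
        exacts [⟨0, rfl⟩, ⟨1, rfl⟩, ⟨2, rfl⟩, ⟨3, rfl⟩, ⟨4, rfl⟩]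
      have hab : a ≠ b := fun h => hxy (by rw [h])
      rcases lt_or_gt_of_ne hab with h | h
      · exact ⟨(a, b), h, rfl⟩
      · exact ⟨(b, a), h, Finset.pair_comm _ _⟩
    · rintro ⟨x, hx, rfl⟩
      refine ⟨?_, ?_⟩
      · intro y hy
        simp only [Finset.mem_insert, Finset.mem_singleton] at hy
        rcases hy with rfl | rfl
        exacts [hkmem _, hkmem _]
      · rw [Finset.card_insert_of_notMem (by simp [hne' (ne_of_lt hx)]),
          Finset.card_singleton]
  have hinjOn : ∀ x ∈ Pset, ∀ y ∈ Pset, ({k x.1, k x.2} : Finset ℕ) = {k y.1, k y.2} → x = y := by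
    intro x hx y hy h
    simp only [hPset, Finset.mem_filter, Finset.mem_univ, true_and] at hx hy
    obtain ⟨h1, h2⟩ := pair_eq_pair_inj hmono hx hy h
    exact Prod.ext h1 h2
  have hmain : P2 (fun S => (X S : MvPolynomial (Finset ℕ) ℤ)) J K
      = ∑ x ∈ Pset, monomial
          (Finsupp.single (J ∪ {k x.1, k x.2}) 1 + Finsupp.single (K \ {k x.1, k x.2}) 1)
          ((-1 : ℤ) ^ pairsCount (symmDiff J K) {k x.1, k x.2}) := by
    unfold P2
    rw [hpows, Finset.sum_image hinjOn]
    exact Finset.sum_congr rfl fun x _ => mono_term _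
  have hsplit : ∀ (g : Fin 5 × Fin 5 → MvPolynomial (Finset ℕ) ℤ),
      ∑ x ∈ Pset, g x = ∑ a : Fin 5, ∑ b : Fin 5, if a < b then g (a, b) else 0 := by
    intro g
    rw [hPset, Finset.sum_filter, Fintype.sum_prod_type]
  constructor
  · rw [hmain, hsplit]
    refine Finset.sum_congr rfl fun a _ => Finset.sum_congr rfl fun b _ => ?_
    by_cases hab : a < b
    · rw [if_pos hab, if_pos hab, mono_term, hS a b, hT a b]
      congr 1
      rw [neg_one_pow_eq_pow_mod_two, hpc a b hab, ← neg_one_pow_eq_pow_mod_two]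
    · rw [if_neg hab, if_neg hab]
  · rw [hmain]
    set S : Fin 5 × Fin 5 → Finset ℕ := fun x => J ∪ {k x.1, k x.2} with hSdef
    set T : Fin 5 × Fin 5 → Finset ℕ := fun x => K \ {k x.1, k x.2} with hTdef
    set μ : Fin 5 × Fin 5 → (Finset ℕ →₀ ℕ) :=
      fun x => Finsupp.single (S x) 1 + Finsupp.single (T x) 1 with hμdef
    have hj'S : ∀ x, j' ∈ S x := fun x => Finset.mem_union_left _ hj'J
    have hj'T : ∀ x, j' ∉ T x := fun x h => hj'K (Finset.mem_sdiff.mp h).1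
    have hSrec : ∀ x ∈ Pset, S x \ J = {k x.1, k x.2} := by
      intro x _
      rw [hSdef]
      simp only []
      rw [Finset.union_sdiff_left]
      refine Finset.sdiff_eq_self_of_disjoint (Finset.disjoint_left.mpr ?_)
      intro y hy
      simp only [Finset.mem_insert, Finset.mem_singleton] at hy
      rcases hy with rfl | rfl
      exacts [hkJ _, hkJ _]
    have hμinj : ∀ x ∈ Pset, ∀ y ∈ Pset, μ x = μ y → x = y := by
      intro x hx y hy h
      have hSS : S x = S y := by
        have h1 : (μ y) (S x) ≠ 0 := by
          rw [← h, hμdef]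
          simp only [Finsupp.add_apply, Finsupp.single_apply, if_pos rfl]
          split_ifs <;> simp
        rw [hμdef] at h1
        simp only [Finsupp.add_apply, Finsupp.single_apply] at h1
        by_cases e1 : S y = S x
        · exact e1.symm
        · by_cases e2 : T y = S x
          · exact absurd (hj'S x) (e2 ▸ hj'T y)
          · rw [if_neg e1, if_neg e2] at h1
            exact absurd rfl h1
      have hTT : T x = T y := by
        have := h
        rw [hμdef] at this
        simp only [hSS] at this
        have := add_left_cancel this
        rcases (Finsupp.single_eq_single_iff _ _ _ _).mp this with ⟨e, _⟩ | ⟨e, _⟩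
        · exact e
        · exact absurd e one_ne_zero
      have : ({k x.1, k x.2} : Finset ℕ) = {k y.1, k y.2} := by
        rw [← hSrec x hx, ← hSrec y hy, hSS]
      exact hinjOn x hx y hy this
    have hc : ∀ x : Fin 5 × Fin 5,
        ((-1 : ℤ) ^ pairsCount (symmDiff J K) {k x.1, k x.2}) ≠ 0 :=
      fun x => pow_ne_zero _ (by decide)
    have hsupp : (∑ x ∈ Pset, monomial (μ x)
        ((-1 : ℤ) ^ pairsCount (symmDiff J K) {k x.1, k x.2})).support = Pset.image μ := by
      apply Finset.Subset.antisymm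
      · refine Finset.Subset.trans MvPolynomial.support_sum ?_
        intro m hm
        simp only [Finset.mem_biUnion] at hm
        obtain ⟨x, hx, hm⟩ := hm
        rw [MvPolynomial.support_monomial, if_neg (hc x)] at hm
        simp only [Finset.mem_singleton] at hm
        subst hm
        exact Finset.mem_image_of_mem _ hx
      · intro m hm
        obtain ⟨x, hx, rfl⟩ := Finset.mem_image.mp hm
        rw [MvPolynomial.mem_support_iff, MvPolynomial.coeff_sum]
        rw [Finset.sum_eq_single_of_mem x hx]
        · rw [MvPolynomial.coeff_monomial, if_pos rfl]
          exact hc x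
        · intro y hy hyx
          rw [MvPolynomial.coeff_monomial, if_neg (fun e => hyx (hμinj y hy x hx e))]
    rw [hsupp, Finset.card_image_of_injOn (fun x hx y hy h => hμinj x hx y hy h)]
    rw [hPset]
    decide
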